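/- arXiv:2503.16756 — 4 statements merged into one kernel-verified Lean document; each statement's English description precedes it below -/
import Mathlib

section
/- Let A be an n×n real matrix, C a d_y×n matrix, B an n×d_u matrix, and suppose A^ℓ = Q₁ N₁^ℓ R₁ + Q₂ N₂^ℓ R₂ for all integers ℓ ≥ 0 (where Q₁ is n×k, N₁ is k×k, R₁ is k×n, Q₂ is n×(n−k), N₂ is (n−k)×(n−k), R₂ is (n−k)×n). Let m, p, q be positive integers, let H be the p×q block matrix with (i,j)-th block C A^{m+i+j−2} B and H̃ the p×q block matrix with (i,j)-th block C Q₁ N₁^{m+i+j−2} R₁ B. Suppose there are constants L > 0 and ρ ∈ (0,1) such that ‖C Q₂ N₂^t R₂ B‖ ≤ L³ ρ^t for every integer t ≥ m. Then ‖H − H̃‖ ≤ √q · p · L³ · ρ^m. -/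
open scoped Matrix.Norms.L2Operator
open Matrix

/-!
Since `A ^ ℓ - Q₁ N₁ ^ ℓ R₁ = Q₂ N₂ ^ ℓ R₂`, the matrix `H - H̃` is the `p × q` block matrix
with blocks `C Q₂ N₂ ^ (m + i + j) R₂ B`, each of norm at most `L³ ρ ^ m`. By Cauchy–Schwarz
across the column blocks, the operator norm of a block matrix is at most the Frobenius norm of
the matrix of its block norms, here `√(p q) L³ ρ ^ m ≤ √q p L³ ρ ^ m`.
-/

open WithLp

theorem EuclideanSpace.norm_sq_toLp_eq_sum_curry {𝕜 ι α : Type*} [RCLike 𝕜] [Fintype ι]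
    [Fintype α] (f : ι × α → 𝕜) :
    ‖toLp 2 f‖ ^ 2 = ∑ i, ‖toLp 2 fun r => f (i, r)‖ ^ 2 := by
  simp only [EuclideanSpace.norm_sq_eq, Fintype.sum_prod_type]

namespace Matrix

variable {𝕜 ι κ α β : Type*} [RCLike 𝕜]

theorem l2_opNorm_le_of_forall_mulVec_le [Fintype ι] [Fintype κ] [DecidableEq κ]
    (M : Matrix ι κ 𝕜) {c : ℝ} (hc : 0 ≤ c)
    (h : ∀ x : EuclideanSpace 𝕜 κ, ‖toLp 2 (M *ᵥ x)‖ ≤ c * ‖x‖) :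
    ‖M‖ ≤ c :=
  ContinuousLinearMap.opNorm_le_bound _ hc h

theorem comp_mulVec_curry [Fintype κ] [Fintype β] (M : Matrix ι κ (Matrix α β 𝕜))
    (x : κ × β → 𝕜) (i : ι) :
    (fun r => (comp ι κ α β 𝕜 M *ᵥ x) (i, r)) = ∑ j, M i j *ᵥ fun s => x (j, s) := by
  ext r
  simp [mulVec, dotProduct, Fintype.sum_prod_type, Finset.sum_apply]

theorem norm_comp_mulVec_curry_le [Fintype κ] [Fintype α] [Fintype β] [DecidableEq β]
    (M : Matrix ι κ (Matrix α β 𝕜)) (x : EuclideanSpace 𝕜 (κ × β)) (i : ι) :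
    ‖toLp 2 fun r => (comp ι κ α β 𝕜 M *ᵥ x) (i, r)‖
      ≤ ∑ j, ‖M i j‖ * ‖toLp 2 fun s => x (j, s)‖ := by
  rw [comp_mulVec_curry, toLp_sum]
  exact (norm_sum_le _ _).trans <| Finset.sum_le_sum fun j _ =>
    l2_opNorm_mulVec (M i j) (toLp 2 fun s => x (j, s))

variable [Fintype ι] [Fintype κ] [Fintype α] [Fintype β] [DecidableEq κ] [DecidableEq β]

theorem l2_opNorm_comp_le_sqrt_sum_sq (M : Matrix ι κ (Matrix α β 𝕜)) :
    ‖comp ι κ α β 𝕜 M‖ ≤ √(∑ i, ∑ j, ‖M i j‖ ^ 2) := by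
  set S := ∑ i, ∑ j, ‖M i j‖ ^ 2
  refine l2_opNorm_le_of_forall_mulVec_le _ (Real.sqrt_nonneg S) fun x => ?_
  have hsq : ‖toLp 2 (comp ι κ α β 𝕜 M *ᵥ x)‖ ^ 2 ≤ S * ‖x‖ ^ 2 := calc
    _ = ∑ i, ‖toLp 2 fun r => (comp ι κ α β 𝕜 M *ᵥ x) (i, r)‖ ^ 2 :=
      EuclideanSpace.norm_sq_toLp_eq_sum_curry _
    _ ≤ ∑ i, (∑ j, ‖M i j‖ * ‖toLp 2 fun s => x (j, s)‖) ^ 2 :=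
      Finset.sum_le_sum fun i _ =>
        pow_le_pow_left₀ (norm_nonneg _) (norm_comp_mulVec_curry_le M x i) 2
    _ ≤ ∑ i, (∑ j, ‖M i j‖ ^ 2) * ∑ j, ‖toLp 2 fun s => x (j, s)‖ ^ 2 :=
      Finset.sum_le_sum fun i _ => Finset.sum_mul_sq_le_sq_mul_sq _ _ _
    _ = S * ‖x‖ ^ 2 := by
      rw [← Finset.sum_mul, ← EuclideanSpace.norm_sq_toLp_eq_sum_curry x]
  calc _ ≤ √(S * ‖x‖ ^ 2) := Real.le_sqrt_of_sq_le hsq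
    _ = √S * ‖x‖ := by rw [Real.sqrt_mul' _ (by positivity), Real.sqrt_sq (norm_nonneg x)]

theorem l2_opNorm_comp_le_of_forall_norm_le (M : Matrix ι κ (Matrix α β 𝕜)) {c : ℝ}
    (hc : 0 ≤ c) (hM : ∀ i j, ‖M i j‖ ≤ c) :
    ‖comp ι κ α β 𝕜 M‖ ≤ √(Fintype.card ι * Fintype.card κ) * c := calc
  _ ≤ √(∑ i, ∑ j, ‖M i j‖ ^ 2) := l2_opNorm_comp_le_sqrt_sum_sq M
  _ ≤ √(∑ _i : ι, ∑ _j : κ, c ^ 2) := Real.sqrt_le_sqrt <| Finset.sum_le_sum fun i _ =>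
      Finset.sum_le_sum fun j _ => pow_le_pow_left₀ (norm_nonneg _) (hM i j) 2
  _ = √(Fintype.card ι * Fintype.card κ) * c := by
      simp only [Finset.sum_const, Finset.card_univ, nsmul_eq_mul]
      rw [← mul_assoc, Real.sqrt_mul' _ (sq_nonneg c), Real.sqrt_sq hc]

end Matrix

theorem hankel_sub_rank_k_approx_norm_le_general {n k dy du m p q : ℕ}
    (A : Matrix (Fin n) (Fin n) ℝ) (C : Matrix (Fin dy) (Fin n) ℝ)
    (B : Matrix (Fin n) (Fin du) ℝ)
    (Q₁ : Matrix (Fin n) (Fin k) ℝ) (N₁ : Matrix (Fin k) (Fin k) ℝ)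
    (R₁ : Matrix (Fin k) (Fin n) ℝ)
    (Q₂ : Matrix (Fin n) (Fin (n - k)) ℝ) (N₂ : Matrix (Fin (n - k)) (Fin (n - k)) ℝ)
    (R₂ : Matrix (Fin (n - k)) (Fin n) ℝ)
    (hdecomp : ∀ ℓ : ℕ, A ^ ℓ = Q₁ * N₁ ^ ℓ * R₁ + Q₂ * N₂ ^ ℓ * R₂)
    (L ρ : ℝ) (hL : 0 < L) (hρ0 : 0 < ρ) (hρ1 : ρ < 1)
    (htail : ∀ t : ℕ, m ≤ t → ‖C * Q₂ * N₂ ^ t * R₂ * B‖ ≤ L ^ 3 * ρ ^ t)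
    (H Ht : Matrix (Fin p × Fin dy) (Fin q × Fin du) ℝ)
    (hH : ∀ (i : Fin p) (j : Fin q) (r : Fin dy) (s : Fin du),
      H (i, r) (j, s) = (C * A ^ (m + (i : ℕ) + (j : ℕ)) * B) r s)
    (hHt : ∀ (i : Fin p) (j : Fin q) (r : Fin dy) (s : Fin du),
      Ht (i, r) (j, s) = (C * Q₁ * N₁ ^ (m + (i : ℕ) + (j : ℕ)) * R₁ * B) r s) :
    ‖H - Ht‖ ≤ Real.sqrt (q : ℝ) * (p : ℝ) * L ^ 3 * ρ ^ m := by
  set E : ℕ → Matrix (Fin dy) (Fin du) ℝ := fun t => C * Q₂ * N₂ ^ t * R₂ * B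
  have hsplit : ∀ t, C * A ^ t * B = C * Q₁ * N₁ ^ t * R₁ * B + E t := fun t => by
    simp only [E, hdecomp, Matrix.mul_add, Matrix.add_mul, Matrix.mul_assoc]
  have hdiff : H - Ht = comp _ _ _ _ ℝ fun (i : Fin p) (j : Fin q) => E (m + i + j) := by
    ext ⟨i, r⟩ ⟨j, s⟩
    show _ = E (m + i + j) r s
    simp [hH, hHt, hsplit]
  have hE : ∀ (i : Fin p) (j : Fin q), ‖E (m + i + j)‖ ≤ L ^ 3 * ρ ^ m := fun i j =>
    (htail _ (by omega)).trans <| mul_le_mul_of_nonneg_left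
      (pow_le_pow_of_le_one hρ0.le hρ1.le (by omega)) (by positivity)
  have hsqrt_p : √(p : ℝ) ≤ p := Real.sqrt_le_self_iff.mpr <| by
    rcases p with _ | p <;> simp
  calc ‖H - Ht‖ ≤ √(p * q : ℝ) * (L ^ 3 * ρ ^ m) := by
        simpa [hdiff] using l2_opNorm_comp_le_of_forall_norm_le _ (by positivity) hE
    _ ≤ √q * p * L ^ 3 * ρ ^ m := by
      rw [Real.sqrt_mul (Nat.cast_nonneg p), mul_comm √(p : ℝ)]
      simp only [mul_assoc]
      gcongr

/-- Lemma B.3. Suppose `A^ℓ = Q₁ N₁^ℓ R₁ + Q₂ N₂^ℓ R₂` for all `ℓ ≥ 0`.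
Let `H` be the `p × q` block matrix with `(i,j)`-th block `C A^(m+i+j-2) B` (one-indexed;
zero-indexed exponent `m + i + j`) and `H̃` the block matrix with blocks
`C Q₁ N₁^(m+i+j-2) R₁ B`. If `‖C Q₂ N₂^t R₂ B‖ ≤ L³ ρ^t` for all `t ≥ m` with
`L > 0` and `ρ ∈ (0,1)`, then `‖H − H̃‖ ≤ √q · p · L³ · ρ^m`. -/
theorem hankel_sub_rank_k_approx_norm_le {n k dy du m p q : ℕ}
    (hm : 0 < m) (hp : 0 < p) (hq : 0 < q)
    (A : Matrix (Fin n) (Fin n) ℝ) (C : Matrix (Fin dy) (Fin n) ℝ)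
    (B : Matrix (Fin n) (Fin du) ℝ)
    (Q₁ : Matrix (Fin n) (Fin k) ℝ) (N₁ : Matrix (Fin k) (Fin k) ℝ)
    (R₁ : Matrix (Fin k) (Fin n) ℝ)
    (Q₂ : Matrix (Fin n) (Fin (n - k)) ℝ) (N₂ : Matrix (Fin (n - k)) (Fin (n - k)) ℝ)
    (R₂ : Matrix (Fin (n - k)) (Fin n) ℝ)
    (hdecomp : ∀ ℓ : ℕ, A ^ ℓ = Q₁ * N₁ ^ ℓ * R₁ + Q₂ * N₂ ^ ℓ * R₂)
    (L ρ : ℝ) (hL : 0 < L) (hρ0 : 0 < ρ) (hρ1 : ρ < 1)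
    (htail : ∀ t : ℕ, m ≤ t → ‖C * Q₂ * N₂ ^ t * R₂ * B‖ ≤ L ^ 3 * ρ ^ t)
    (H Ht : Matrix (Fin p × Fin dy) (Fin q × Fin du) ℝ)
    (hH : ∀ (i : Fin p) (j : Fin q) (r : Fin dy) (s : Fin du),
      H (i, r) (j, s) = (C * A ^ (m + (i : ℕ) + (j : ℕ)) * B) r s)
    (hHt : ∀ (i : Fin p) (j : Fin q) (r : Fin dy) (s : Fin du),
      Ht (i, r) (j, s) = (C * Q₁ * N₁ ^ (m + (i : ℕ) + (j : ℕ)) * R₁ * B) r s) :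
    ‖H - Ht‖ ≤ Real.sqrt (q : ℝ) * (p : ℝ) * L ^ 3 * ρ ^ m :=
  hankel_sub_rank_k_approx_norm_le_general A C B Q₁ N₁ R₁ Q₂ N₂ R₂ hdecomp L ρ hL hρ0 hρ1 htail H Ht
    hH hHt
end

section
/- Let Õ and Ô be (p·d)×k real block matrices, each consisting of p blocks of size d×k, and write M_{i:j} for the submatrix of a block matrix M consisting of its i-th through j-th blocks. Suppose Õ_{2:p} = Õ_{1:p−1}·N₁ for a k×k matrix N₁, suppose Ô_{1:p−1} has full column rank k, let Ŝ be an invertible k×k matrix, and set E := Õ − Ô Ŝ. Define N̂₁ := (Ô_{1:p−1}ᴴ Ô_{1:p−1})⁻¹ Ô_{1:p−1}ᴴ Ô_{2:p}. Then ‖N₁ − Ŝ⁻¹ N̂₁ Ŝ‖ ≤ ‖Ŝ⁻¹‖·(1 + ‖N₁‖)·‖E‖ / σ_min(Ô_{1:p−1}). -/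
/-!
Write `Õ = Ô Ŝ + E` and let `A = Ô_{1:p−1}`, `B = Ô_{2:p}`. Restricted to blocks, the shift
relation reads `B Ŝ + E_{2:p} = (A Ŝ + E_{1:p−1}) N₁`. The least-squares inverse
`P = (Aᴴ A)⁻¹ Aᴴ` satisfies `P A = 1`, so `Ŝ⁻¹ (P B) Ŝ = N₁ + Ŝ⁻¹ P (E_{1:p−1} N₁ − E_{2:p})`.
Since `A P` is an orthogonal projection, `σ_min(A) ‖P‖ ≤ ‖A P‖ ≤ 1`, and every block slice of `E`
has norm at most `‖E‖`.
-/

open scoped Matrix.Norms.L2Operator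
open Matrix

/-- The smallest singular value of a matrix: the infimum of `‖M x‖` over unit vectors `x`
of Euclidean space. -/
noncomputable def sigmaMin {m n : Type*} [Fintype m] [Fintype n] [DecidableEq n]
    (M : Matrix m n ℝ) : ℝ :=
  sInf {r : ℝ | ∃ x : EuclideanSpace ℝ n, ‖x‖ = 1 ∧ r = ‖Matrix.toEuclideanLin M x‖}

/-- For a `(p·d) × k` block matrix `M` with `p` blocks of size `d × k`, the submatrix
consisting of blocks `i, i+1, …, i+len-1` (zero-indexed; this is `M_{i+1:i+len}` in the
one-indexed notation of the paper). -/
def blockSlice {p d k : ℕ} (M : Matrix (Fin p × Fin d) (Fin k) ℝ) (i len : ℕ)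
    (h : i + len ≤ p) : Matrix (Fin len × Fin d) (Fin k) ℝ :=
  fun rd c => M (⟨i + (rd.1 : ℕ), by have := rd.1.isLt; omega⟩, rd.2) c

section SigmaMin

variable {m n : Type*} [Fintype m] [Fintype n] [DecidableEq n]

lemma sigmaMin_nonneg (A : Matrix m n ℝ) : 0 ≤ sigmaMin A :=
  Real.sInf_nonneg fun _ ⟨_, _, hr⟩ => hr ▸ norm_nonneg _

lemma sigmaMin_mul_norm_le (A : Matrix m n ℝ) (x : EuclideanSpace ℝ n) :
    sigmaMin A * ‖x‖ ≤ ‖toEuclideanLin A x‖ := by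
  rcases eq_or_ne x 0 with rfl | hx
  · simp
  have hx' : 0 < ‖x‖ := norm_pos_iff.mpr hx
  have hunit : sigmaMin A ≤ ‖toEuclideanLin A (‖x‖⁻¹ • x)‖ :=
    csInf_le ⟨0, fun _ ⟨_, _, hr⟩ => hr ▸ norm_nonneg _⟩
      ⟨_, norm_smul_inv_norm hx, rfl⟩
  rwa [map_smul, norm_smul, norm_inv, norm_norm, ← div_eq_inv_mul, le_div_iff₀ hx'] at hunit

lemma sigmaMin_pos_of_injective [Nonempty n] {A : Matrix m n ℝ}
    (hA : Function.Injective A.mulVec) : 0 < sigmaMin A := by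
  have hinj : Function.Injective (toEuclideanLin A) := fun x y hxy =>
    WithLp.ofLp_injective 2 (hA (by simpa using congrArg WithLp.ofLp hxy))
  obtain ⟨K, hK, hanti⟩ := (toEuclideanLin A).injective_iff_antilipschitz.mp hinj
  refine (inv_pos.mpr (NNReal.coe_pos.mpr hK)).trans_le (le_csInf ?_ ?_)
  · exact ⟨_, _, (PiLp.norm_single 2 _ (Classical.arbitrary n) (1 : ℝ)).trans norm_one, rfl⟩
  rintro _ ⟨x, hx, rfl⟩
  have := ZeroHomClass.bound_of_antilipschitz (toEuclideanLin A) hanti x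
  rw [hx] at this
  rwa [inv_le_iff_one_le_mul₀' (NNReal.coe_pos.mpr hK)]

lemma sigmaMin_mul_l2_opNorm_le {l : Type*} [Fintype l] [DecidableEq l] (A : Matrix m n ℝ)
    (X : Matrix n l ℝ) :
    sigmaMin A * ‖X‖ ≤ ‖A * X‖ := by
  rcases (sigmaMin_nonneg A).eq_or_lt with hσ | hσ
  · rw [← hσ, zero_mul]; exact norm_nonneg _
  rw [← le_div_iff₀' hσ, l2_opNorm_def]
  refine ContinuousLinearMap.opNorm_le_bound _ (by positivity) fun y => ?_
  rw [div_mul_eq_mul_div, le_div_iff₀' hσ]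
  calc sigmaMin A * ‖toEuclideanLin X y‖ ≤ ‖toEuclideanLin A (toEuclideanLin X y)‖ :=
        sigmaMin_mul_norm_le A _
    _ = ‖toEuclideanLin (A * X) y‖ := by simp
    _ ≤ ‖A * X‖ * ‖y‖ := l2_opNorm_mulVec _ _

end SigmaMin

section LeastSquares

lemma mulVec_injective_of_rank_eq_card {m n : Type*} [Fintype n] {A : Matrix m n ℝ}
    (hA : A.rank = Fintype.card n) : Function.Injective A.mulVec := by
  have hker : Module.finrank ℝ (LinearMap.ker A.mulVecLin) = 0 := by
    have := LinearMap.finrank_range_add_finrank_ker A.mulVecLin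
    rw [Module.finrank_fintype_fun_eq_card] at this
    rw [rank] at hA
    omega
  exact LinearMap.ker_eq_bot.mp (Submodule.finrank_eq_zero.mp hker)

variable {m n : Type*} [Fintype m] [Fintype n] [DecidableEq n] {A : Matrix m n ℝ}

lemma isUnit_det_conjTranspose_mul_self (hA : Function.Injective A.mulVec) :
    IsUnit (Aᴴ * A).det := by
  rw [← isUnit_iff_isUnit_det, ← mulVec_injective_iff_isUnit, ← coe_mulVecLin,
    ← LinearMap.ker_eq_bot, ker_mulVecLin_conjTranspose_mul_self, LinearMap.ker_eq_bot]
  exact hA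

lemma pinv_mul_self (hG : IsUnit (Aᴴ * A).det) : (Aᴴ * A)⁻¹ * Aᴴ * A = 1 := by
  rw [Matrix.mul_assoc, nonsing_inv_mul _ hG]

lemma isStarProjection_mul_pinv (hG : IsUnit (Aᴴ * A).det) :
    IsStarProjection (A * ((Aᴴ * A)⁻¹ * Aᴴ)) where
  isIdempotentElem := by
    rw [IsIdempotentElem, Matrix.mul_assoc, ← Matrix.mul_assoc _ A, pinv_mul_self hG,
      Matrix.one_mul]
  isSelfAdjoint := by
    rw [IsSelfAdjoint, star_eq_conjTranspose, conjTranspose_mul, conjTranspose_mul,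
      conjTranspose_nonsing_inv, (isHermitian_conjTranspose_mul_self A).eq,
      conjTranspose_conjTranspose, Matrix.mul_assoc]

lemma sigmaMin_mul_l2_opNorm_pinv_le [DecidableEq m] (hG : IsUnit (Aᴴ * A).det) :
    sigmaMin A * ‖(Aᴴ * A)⁻¹ * Aᴴ‖ ≤ 1 :=
  (sigmaMin_mul_l2_opNorm_le A _).trans (isStarProjection_mul_pinv hG).norm_le

end LeastSquares

section Perturbation

variable {m n : Type*} [Fintype m] [Fintype n] [DecidableEq n]

lemma sub_conj_pinv_mul_eq {A B E₁ E₂ : Matrix m n ℝ} {N S : Matrix n n ℝ}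
    (hG : IsUnit (Aᴴ * A).det) (hS : IsUnit S.det)
    (hshift : B * S + E₂ = (A * S + E₁) * N) :
    N - S⁻¹ * ((Aᴴ * A)⁻¹ * Aᴴ * B) * S = -(S⁻¹ * ((Aᴴ * A)⁻¹ * Aᴴ * (E₁ * N - E₂))) := by
  set P := (Aᴴ * A)⁻¹ * Aᴴ
  have hBS : B * S = A * (S * N) + (E₁ * N - E₂) := by
    rw [← Matrix.mul_assoc, ← add_sub_assoc, ← Matrix.add_mul, ← hshift, add_sub_cancel_right]
  have hPBS : P * B * S = S * N + P * (E₁ * N - E₂) := by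
    rw [Matrix.mul_assoc, hBS, Matrix.mul_add, ← Matrix.mul_assoc P, pinv_mul_self hG,
      Matrix.one_mul]
  rw [Matrix.mul_assoc, hPBS, Matrix.mul_add, ← Matrix.mul_assoc, nonsing_inv_mul _ hS,
    Matrix.one_mul]
  abel

theorem l2_opNorm_sub_conj_pinv_mul_le [DecidableEq m] [Nonempty n] {A B E₁ E₂ : Matrix m n ℝ}
    {N S : Matrix n n ℝ} (hA : Function.Injective A.mulVec) (hS : IsUnit S.det)
    (hshift : B * S + E₂ = (A * S + E₁) * N) {ε : ℝ} (hE₁ : ‖E₁‖ ≤ ε) (hE₂ : ‖E₂‖ ≤ ε) :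
    ‖N - S⁻¹ * ((Aᴴ * A)⁻¹ * Aᴴ * B) * S‖ ≤ ‖S⁻¹‖ * (1 + ‖N‖) * ε / sigmaMin A := by
  have hG := isUnit_det_conjTranspose_mul_self hA
  have hσ := sigmaMin_pos_of_injective hA
  have hP : ‖(Aᴴ * A)⁻¹ * Aᴴ‖ ≤ 1 / sigmaMin A :=
    (le_div_iff₀' hσ).mpr (sigmaMin_mul_l2_opNorm_pinv_le hG)
  have hE : ‖E₁ * N - E₂‖ ≤ (1 + ‖N‖) * ε := by
    calc ‖E₁ * N - E₂‖ ≤ ‖E₁‖ * ‖N‖ + ‖E₂‖ :=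
          (norm_sub_le _ _).trans (add_le_add_left (l2_opNorm_mul _ _) _)
      _ ≤ ε * ‖N‖ + ε := by gcongr
      _ = (1 + ‖N‖) * ε := by ring
  rw [sub_conj_pinv_mul_eq hG hS hshift, norm_neg]
  calc ‖S⁻¹ * ((Aᴴ * A)⁻¹ * Aᴴ * (E₁ * N - E₂))‖
      ≤ ‖S⁻¹‖ * (‖(Aᴴ * A)⁻¹ * Aᴴ‖ * ‖E₁ * N - E₂‖) :=
        (l2_opNorm_mul _ _).trans (by gcongr; exact l2_opNorm_mul _ _)
    _ ≤ ‖S⁻¹‖ * (1 / sigmaMin A * ((1 + ‖N‖) * ε)) := by gcongr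
    _ = ‖S⁻¹‖ * (1 + ‖N‖) * ε / sigmaMin A := by ring

end Perturbation

lemma l2_opNorm_submatrix_le {l m n : Type*} [Fintype l] [Fintype m] [Fintype n]
    [DecidableEq n] (M : Matrix m n ℝ) {e : l → m} (he : Function.Injective e) :
    ‖M.submatrix e id‖ ≤ ‖M‖ := by
  rw [l2_opNorm_def]
  refine ContinuousLinearMap.opNorm_le_bound _ (norm_nonneg M) fun x =>
    le_trans ?_ (l2_opNorm_mulVec M x)
  change ‖toEuclideanLin (M.submatrix e id) x‖ ≤ ‖toEuclideanLin M x‖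
  rw [EuclideanSpace.norm_eq, EuclideanSpace.norm_eq]
  refine Real.sqrt_le_sqrt ?_
  calc ∑ j, ‖toEuclideanLin (M.submatrix e id) x j‖ ^ 2
      = ∑ i ∈ Finset.univ.map ⟨e, he⟩, ‖toEuclideanLin M x i‖ ^ 2 := by
        rw [Finset.sum_map]; rfl
    _ ≤ ∑ i, ‖toEuclideanLin M x i‖ ^ 2 :=
      Finset.sum_le_univ_sum_of_nonneg fun _ => by positivity

section BlockSlice

variable {p d k : ℕ} (M : Matrix (Fin p × Fin d) (Fin k) ℝ) (i len : ℕ) (h : i + len ≤ p)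

lemma blockSlice_add (M' : Matrix (Fin p × Fin d) (Fin k) ℝ) :
    blockSlice (M + M') i len h = blockSlice M i len h + blockSlice M' i len h :=
  rfl

lemma blockSlice_mul (N : Matrix (Fin k) (Fin k) ℝ) :
    blockSlice (M * N) i len h = blockSlice M i len h * N :=
  rfl

lemma l2_opNorm_blockSlice_le : ‖blockSlice M i len h‖ ≤ ‖M‖ :=
  l2_opNorm_submatrix_le M (e := fun rd : Fin len × Fin d => (⟨i + rd.1, by omega⟩, rd.2))
    fun a b hab => by simp only [Prod.ext_iff, Fin.ext_iff] at hab ⊢; omega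

end BlockSlice

/-- core perturbation estimate of Lemma 6.2. Suppose
`Õ_{2:p} = Õ_{1:p−1} N₁`, `Ô_{1:p−1}` has full column rank `k`, `Ŝ` is invertible,
`E := Õ − Ô Ŝ`, and `N̂₁ := (Ô_{1:p−1}ᴴ Ô_{1:p−1})⁻¹ Ô_{1:p−1}ᴴ Ô_{2:p}`. Then
`‖N₁ − Ŝ⁻¹ N̂₁ Ŝ‖ ≤ ‖Ŝ⁻¹‖ (1 + ‖N₁‖) ‖E‖ / σ_min(Ô_{1:p−1})`. -/
theorem N1_similarity_error {p d k : ℕ} (hp : 2 ≤ p) (hk : 0 < k)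
    (Otil Ohat : Matrix (Fin p × Fin d) (Fin k) ℝ)
    (N₁ S : Matrix (Fin k) (Fin k) ℝ)
    (hshift : blockSlice Otil 1 (p - 1) (by omega) =
      blockSlice Otil 0 (p - 1) (by omega) * N₁)
    (hrank : (blockSlice Ohat 0 (p - 1) (by omega)).rank = k)
    (hS : IsUnit S.det)
    (E : Matrix (Fin p × Fin d) (Fin k) ℝ) (hE : E = Otil - Ohat * S)
    (N₁hat : Matrix (Fin k) (Fin k) ℝ)
    (hN₁hat : N₁hat =
      ((blockSlice Ohat 0 (p - 1) (by omega))ᴴ * blockSlice Ohat 0 (p - 1) (by omega))⁻¹ *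
        (blockSlice Ohat 0 (p - 1) (by omega))ᴴ * blockSlice Ohat 1 (p - 1) (by omega)) :
    ‖N₁ - S⁻¹ * N₁hat * S‖ ≤
      ‖S⁻¹‖ * (1 + ‖N₁‖) * ‖E‖ / sigmaMin (blockSlice Ohat 0 (p - 1) (by omega)) := by
  have : Nonempty (Fin k) := Fin.pos_iff_nonempty.mp hk
  have hOtil : Otil = Ohat * S + E := by rw [hE, add_sub_cancel]
  have hinj := mulVec_injective_of_rank_eq_card (hrank.trans (Fintype.card_fin k).symm)
  subst hN₁hat
  refine l2_opNorm_sub_conj_pinv_mul_le hinj hS ?_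
    (l2_opNorm_blockSlice_le E 0 (p - 1) (by omega))
    (l2_opNorm_blockSlice_le E 1 (p - 1) (by omega))
  simpa only [hOtil, blockSlice_add, blockSlice_mul] using hshift
end

section
/- Let C₀ be a d×k matrix, N₁ an invertible k×k matrix, s a positive integer, Ĉ a d×k matrix, N̂ a k×k matrix, and Ŝ an invertible k×k matrix. Suppose Õ₁ = C₀ N₁ˢ and Ô₁ = Ĉ N̂ for some d×k matrices Õ₁, Ô₁, and set E := Õ₁ − Ô₁ Ŝ. Then ‖C₀ − Ĉ Ŝ‖ ≤ ‖Ĉ Ŝ‖ · ‖Ŝ⁻¹ N̂ Ŝ N₁⁻ˢ − I‖ + ‖E‖ · ‖N₁⁻ˢ‖. -/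
open scoped Matrix.Norms.L2Operator
open Matrix

variable {m n : Type*} [Fintype n] [DecidableEq n]

theorem Matrix.sub_mul_eq_mul_conj_mul_inv_sub_one_add {R : Type*} [CommRing R]
    (C Chat : Matrix m n R) (M Nhat S : Matrix n n R) (hM : IsUnit M.det) (hS : IsUnit S.det) :
    C - Chat * S =
      Chat * S * (S⁻¹ * Nhat * S * M⁻¹ - 1) + (C * M - Chat * Nhat * S) * M⁻¹ := by
  have hSS : Chat * S * (S⁻¹ * Nhat * S * M⁻¹) = Chat * Nhat * S * M⁻¹ := by
    simp only [Matrix.mul_assoc, mul_nonsing_inv_cancel_left S _ hS]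
  have hMM : C * M * M⁻¹ = C := by
    rw [Matrix.mul_assoc, mul_nonsing_inv M hM, Matrix.mul_one]
  rw [Matrix.mul_sub, Matrix.sub_mul, hSS, hMM, Matrix.mul_one]
  abel

variable [Fintype m] {𝕜 : Type*} [RCLike 𝕜]

theorem Matrix.l2_opNorm_sub_mul_le (C Chat : Matrix m n 𝕜) (M Nhat S : Matrix n n 𝕜)
    (hM : IsUnit M.det) (hS : IsUnit S.det) :
    ‖C - Chat * S‖ ≤
      ‖Chat * S‖ * ‖S⁻¹ * Nhat * S * M⁻¹ - 1‖ + ‖C * M - Chat * Nhat * S‖ * ‖M⁻¹‖ := by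
  rw [sub_mul_eq_mul_conj_mul_inv_sub_one_add C Chat M Nhat S hM hS]
  exact (norm_add_le _ _).trans (add_le_add (l2_opNorm_mul _ _) (l2_opNorm_mul _ _))

theorem output_matrix_error_general {d k s : ℕ}
    (C₀ Chat : Matrix (Fin d) (Fin k) ℝ)
    (N₁ Nhat S : Matrix (Fin k) (Fin k) ℝ)
    (hN₁ : IsUnit N₁.det) (hS : IsUnit S.det)
    (Otil₁ Ohat₁ : Matrix (Fin d) (Fin k) ℝ)
    (hOtil₁ : Otil₁ = C₀ * N₁ ^ s) (hOhat₁ : Ohat₁ = Chat * Nhat)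
    (E : Matrix (Fin d) (Fin k) ℝ) (hE : E = Otil₁ - Ohat₁ * S) :
    ‖C₀ - Chat * S‖ ≤
      ‖Chat * S‖ * ‖S⁻¹ * Nhat * S * (N₁ ^ s)⁻¹ - 1‖ + ‖E‖ * ‖(N₁ ^ s)⁻¹‖ := by
  have hN₁s : IsUnit (N₁ ^ s).det := by simpa only [det_pow] using hN₁.pow s
  subst hE hOtil₁ hOhat₁
  exact l2_opNorm_sub_mul_le C₀ Chat (N₁ ^ s) Nhat S hN₁s hS

/-- core estimate of Lemma 6.3. Let `C₀` be `d × k`, `N₁` an invertible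
`k × k` matrix, `s ≥ 1`, and suppose `Õ₁ = C₀ N₁ˢ`, `Ô₁ = Ĉ N̂`, `E := Õ₁ − Ô₁ Ŝ` with `Ŝ`
invertible. Then `‖C₀ − Ĉ Ŝ‖ ≤ ‖Ĉ Ŝ‖ ‖Ŝ⁻¹ N̂ Ŝ N₁⁻ˢ − I‖ + ‖E‖ ‖N₁⁻ˢ‖`. -/
theorem output_matrix_error {d k s : ℕ} (hs : 0 < s)
    (C₀ Chat : Matrix (Fin d) (Fin k) ℝ)
    (N₁ Nhat S : Matrix (Fin k) (Fin k) ℝ)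
    (hN₁ : IsUnit N₁.det) (hS : IsUnit S.det)
    (Otil₁ Ohat₁ : Matrix (Fin d) (Fin k) ℝ)
    (hOtil₁ : Otil₁ = C₀ * N₁ ^ s) (hOhat₁ : Ohat₁ = Chat * Nhat)
    (E : Matrix (Fin d) (Fin k) ℝ) (hE : E = Otil₁ - Ohat₁ * S) :
    ‖C₀ - Chat * S‖ ≤
      ‖Chat * S‖ * ‖S⁻¹ * Nhat * S * (N₁ ^ s)⁻¹ - 1‖ + ‖E‖ * ‖(N₁ ^ s)⁻¹‖ :=
  output_matrix_error_general C₀ Chat N₁ Nhat S hN₁ hS Otil₁ Ohat₁ hOtil₁ hOhat₁ E hE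
end

section
/- Let B₀ be a k×d matrix, N₁ an invertible k×k matrix, s a positive integer, B̂ a k×d matrix, N̂ a k×k matrix, and Ŝ an invertible k×k matrix. Suppose C̃₁ = N₁ˢ B₀ and Ĉ₁ = N̂ B̂ for some k×d matrices C̃₁, Ĉ₁, and set E := C̃₁ − Ŝ⁻¹ Ĉ₁. Then ‖B₀ − Ŝ⁻¹ B̂‖ ≤ ‖N₁⁻ˢ Ŝ⁻¹ N̂ Ŝ − I‖ · ‖Ŝ⁻¹ B̂‖ + ‖N₁⁻ˢ‖ · ‖E‖. -/
open scoped Matrix.Norms.L2Operator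
open Matrix

/-! The error `B₀ - Ŝ⁻¹ B̂` splits exactly as
`(M⁻¹ Ŝ⁻¹ N̂ Ŝ - 1) (Ŝ⁻¹ B̂) + M⁻¹ (M B₀ - Ŝ⁻¹ N̂ B̂)` with `M = N₁ˢ`; the estimate is the triangle
inequality plus submultiplicativity of the operator norm applied to the two terms. -/

namespace Matrix

variable {m n : Type*} [Fintype m] [DecidableEq m]

theorem sub_nonsing_inv_mul_eq_conj_sub_one_mul_add {R : Type*} [CommRing R]
    {M S Nhat : Matrix m m R} (hM : IsUnit M.det) (hS : IsUnit S.det) (B Bhat : Matrix m n R) :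
    B - S⁻¹ * Bhat =
      (M⁻¹ * S⁻¹ * Nhat * S - 1) * (S⁻¹ * Bhat) + M⁻¹ * (M * B - S⁻¹ * (Nhat * Bhat)) := by
  have hconj : M⁻¹ * S⁻¹ * Nhat * S * (S⁻¹ * Bhat) = M⁻¹ * (S⁻¹ * (Nhat * Bhat)) := by
    simp only [Matrix.mul_assoc, mul_nonsing_inv_cancel_left _ _ hS]
  rw [Matrix.sub_mul, hconj, Matrix.one_mul, Matrix.mul_sub, nonsing_inv_mul_cancel_left _ _ hM]
  abel

theorem l2_opNorm_sub_nonsing_inv_mul_le {𝕜 : Type*} [RCLike 𝕜] [Fintype n] [DecidableEq n]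
    {M S Nhat : Matrix m m 𝕜} (hM : IsUnit M.det) (hS : IsUnit S.det) (B Bhat : Matrix m n 𝕜) :
    ‖B - S⁻¹ * Bhat‖ ≤
      ‖M⁻¹ * S⁻¹ * Nhat * S - 1‖ * ‖S⁻¹ * Bhat‖ + ‖M⁻¹‖ * ‖M * B - S⁻¹ * (Nhat * Bhat)‖ := by
  rw [sub_nonsing_inv_mul_eq_conj_sub_one_mul_add hM hS]
  exact (norm_add_le _ _).trans (add_le_add (l2_opNorm_mul _ _) (l2_opNorm_mul _ _))

end Matrix

theorem input_matrix_error_general {d k s : ℕ}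
    (B₀ Bhat : Matrix (Fin k) (Fin d) ℝ)
    (N₁ Nhat S : Matrix (Fin k) (Fin k) ℝ)
    (hN₁ : IsUnit N₁.det) (hS : IsUnit S.det)
    (Ctil₁ Chat₁ : Matrix (Fin k) (Fin d) ℝ)
    (hCtil₁ : Ctil₁ = N₁ ^ s * B₀) (hChat₁ : Chat₁ = Nhat * Bhat)
    (E : Matrix (Fin k) (Fin d) ℝ) (hE : E = Ctil₁ - S⁻¹ * Chat₁) :
    ‖B₀ - S⁻¹ * Bhat‖ ≤
      ‖(N₁ ^ s)⁻¹ * S⁻¹ * Nhat * S - 1‖ * ‖S⁻¹ * Bhat‖ + ‖(N₁ ^ s)⁻¹‖ * ‖E‖ := by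
  have hNs : IsUnit (N₁ ^ s).det := by
    rw [det_pow]
    exact hN₁.pow s
  subst hE hCtil₁ hChat₁
  exact l2_opNorm_sub_nonsing_inv_mul_le hNs hS B₀ Bhat

/-- core estimate of Lemma 6.4. Let `B₀` be `k × d`, `N₁` an invertible
`k × k` matrix, `s ≥ 1`, and suppose `C̃₁ = N₁ˢ B₀`, `Ĉ₁ = N̂ B̂`, `E := C̃₁ − Ŝ⁻¹ Ĉ₁` with `Ŝ`
invertible. Then `‖B₀ − Ŝ⁻¹ B̂‖ ≤ ‖N₁⁻ˢ Ŝ⁻¹ N̂ Ŝ − I‖ ‖Ŝ⁻¹ B̂‖ + ‖N₁⁻ˢ‖ ‖E‖`. -/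
theorem input_matrix_error {d k s : ℕ} (hs : 0 < s)
    (B₀ Bhat : Matrix (Fin k) (Fin d) ℝ)
    (N₁ Nhat S : Matrix (Fin k) (Fin k) ℝ)
    (hN₁ : IsUnit N₁.det) (hS : IsUnit S.det)
    (Ctil₁ Chat₁ : Matrix (Fin k) (Fin d) ℝ)
    (hCtil₁ : Ctil₁ = N₁ ^ s * B₀) (hChat₁ : Chat₁ = Nhat * Bhat)
    (E : Matrix (Fin k) (Fin d) ℝ) (hE : E = Ctil₁ - S⁻¹ * Chat₁) :
    ‖B₀ - S⁻¹ * Bhat‖ ≤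
      ‖(N₁ ^ s)⁻¹ * S⁻¹ * Nhat * S - 1‖ * ‖S⁻¹ * Bhat‖ + ‖(N₁ ^ s)⁻¹‖ * ‖E‖ :=
  input_matrix_error_general B₀ Bhat N₁ Nhat S hN₁ hS Ctil₁ Chat₁ hCtil₁ hChat₁ E hE
end
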